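/- arXiv:2306.07126 — 10 statements merged into one kernel-verified Lean document; each statement's English description precedes it below -/
import Mathlib

section
/- For every disjunctive logic program π, the induced assumption-based framework ABF(π) is flat: for every Δ ⊆ ∼Atoms(π) and every ψ ∈ ∼Atoms(π), if π ∪ Δ ⊢ ψ then ψ ∈ Δ. -/
namespace DLP

/-- Formulas of the language ℒ: disjunctions of atoms `p₁ ∨ … ∨ p_n`,
negated atoms `∼p`, and program rules
`q₁,…,q_m, ∼r₁,…,∼r_k → p₁ ∨ … ∨ p_n`. -/
inductive Formula (α : Type*) where
  | disj : List α → Formula α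
  | neg  : α → Formula α
  | rule : List α → List α → List α → Formula α

/-- A program rule: positive body atoms, negated body atoms, and head disjuncts. -/
structure Rule (α : Type*) where
  pos : List α
  neg : List α
  head : List α

/-- The ℒ-formula corresponding to a rule. -/
def Rule.toFormula {α : Type*} (r : Rule α) : Formula α :=
  Formula.rule r.pos r.neg r.head

/-- The set of ℒ-formulas corresponding to a program. -/
def formulas {α : Type*} (π : Set (Rule α)) : Set (Formula α) :=
  Rule.toFormula '' π

/-- `Atoms(π)`: the atoms occurring in the program π. -/
def atoms {α : Type*} (π : Set (Rule α)) : Set α :=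
  {p | ∃ r ∈ π, p ∈ r.pos ∨ p ∈ r.neg ∨ p ∈ r.head}

/-- `∼Atoms(π)`. -/
def negAtoms {α : Type*} (π : Set (Rule α)) : Set (Formula α) :=
  Formula.neg '' atoms π

/-- Satisfaction of an ℒ-formula by a set of atoms `M`. -/
def satisfies {α : Type*} (M : Set α) : Formula α → Prop
  | Formula.disj l => ∃ p ∈ l, p ∈ M
  | Formula.neg p => p ∉ M
  | Formula.rule pb nb hd =>
      ((∀ p ∈ pb, p ∈ M) ∧ (∀ q ∈ nb, q ∉ M)) → ∃ p ∈ hd, p ∈ M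

/-- `M` is a model of the program π. -/
def isModel {α : Type*} (M : Set α) (π : Set (Rule α)) : Prop :=
  ∀ r ∈ π, satisfies M r.toFormula

/-- The Gelfond–Lifschitz reduct `π^S`. -/
def reduct {α : Type*} (π : Set (Rule α)) (S : Set α) : Set (Rule α) :=
  {r' | ∃ r ∈ π, (∀ x ∈ r.neg, x ∉ S) ∧ r' = ⟨r.pos, [], r.head⟩}

/-- `M` is a (two-valued) stable model of π: a ⊆-minimal model of `π^M`. -/
def stableModel {α : Type*} (π : Set (Rule α)) (M : Set α) : Prop :=
  M ⊆ atoms π ∧ isModel M (reduct π M) ∧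
    ∀ N : Set α, N ⊂ M → ¬ isModel N (reduct π M)

/-- The consequence relation `Δ ⊢ φ`, generated by membership and the rules
[MP], [Res] and [RBC].  Note that `Δ ⊢ p` for an atom `p` is rendered as
`Derives Δ (Formula.disj [p])`, and the premise `→ φᵢ` used in [RBC] is the
rule with empty body and head `φᵢ`. -/
inductive Derives {α : Type*} : Set (Formula α) → Formula α → Prop
  | mem {Δ : Set (Formula α)} {φ : Formula α} :
      φ ∈ Δ → Derives Δ φ
  | mp {Δ : Set (Formula α)} {pb nb hd : List α} :
      Derives Δ (Formula.rule pb nb hd) →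
      (∀ p ∈ pb, Derives Δ (Formula.disj [p])) →
      (∀ q ∈ nb, Derives Δ (Formula.neg q)) →
      Derives Δ (Formula.disj hd)
  | res {Δ : Set (Formula α)} {L₁ Φ L₂ : List α} :
      Derives Δ (Formula.disj (L₁ ++ Φ ++ L₂)) →
      (∀ q ∈ Φ, Derives Δ (Formula.neg q)) →
      Derives Δ (Formula.disj (L₁ ++ L₂))
  | rbc {Δ : Set (Formula α)} {Φ hd : List α} :
      Derives Δ (Formula.disj Φ) →
      (∀ q ∈ Φ, Derives (Δ ∪ {Formula.rule [] [] [q]}) (Formula.disj hd)) →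
      Derives Δ (Formula.disj hd)

/-- `M̄ = {∼p : p ∈ Atoms(π) \ M}`. -/
def barSet {α : Type*} (π : Set (Rule α)) (M : Set α) : Set (Formula α) :=
  Formula.neg '' (atoms π \ M)

/-- `⌊Δ⌋ = {p : ∼p ∈ Δ}`. -/
def floorSet {α : Type*} (Δ : Set (Formula α)) : Set α :=
  {p | Formula.neg p ∈ Δ}

/-- `Δ̲ = Atoms(π) \ ⌊Δ⌋`. -/
def underline {α : Type*} (π : Set (Rule α)) (Δ : Set (Formula α)) : Set α :=
  atoms π \ floorSet Δ

/-- In `ABF(π)`, a set of assumptions `Δ` attacks the assumption `∼p`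
iff `π ∪ Δ ⊢ p`. -/
def attacks {α : Type*} (π : Set (Rule α)) (Δ : Set (Formula α)) (p : α) : Prop :=
  Derives (formulas π ∪ Δ) (Formula.disj [p])

/-- `Δ` is conflict-free in `ABF(π)`: no subset of `Δ` attacks a member of `Δ`. -/
def conflictFree {α : Type*} (π : Set (Rule α)) (Δ : Set (Formula α)) : Prop :=
  ¬ ∃ Δ' ⊆ Δ, ∃ p : α, Formula.neg p ∈ Δ ∧ attacks π Δ' p

/-- `Δ` is a stable extension of `ABF(π)`: `Δ ⊆ ∼Atoms(π)` is conflict-free and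
attacks every assumption in `∼Atoms(π) \ Δ`. -/
def stableExtension {α : Type*} (π : Set (Rule α)) (Δ : Set (Formula α)) : Prop :=
  Δ ⊆ negAtoms π ∧ conflictFree π Δ ∧
    ∀ p ∈ atoms π, Formula.neg p ∉ Δ → attacks π Δ p

/-- the ABF induced by a disjunctive logic program is flat. -/
theorem stmt0 {α : Type*} (π : Set (Rule α)) (hfin : π.Finite)
    (Δ : Set (Formula α)) (hΔ : Δ ⊆ negAtoms π)
    (ψ : Formula α) (hψ : ψ ∈ negAtoms π)
    (h : Derives (formulas π ∪ Δ) ψ) :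
    ψ ∈ Δ := by
  obtain ⟨p, -, rfl⟩ := hψ
  cases h with
  | mem hm =>
    rcases hm with hm | hm
    · obtain ⟨r, -, hr⟩ := hm
      cases hr
    · exact hm

end DLP
end

section
/- (Soundness.) Let Δ be a set of ℒ-formulas each of which is either a negated atom ∼p or a rule q₁,…,q_m, ∼r₁,…,∼r_k → p₁∨…∨p_n. If Δ ⊢ ψ, then M ⊨ ψ for every set M of atoms such that M ⊨ Δ. -/
namespace DLP

theorem soundness_aux {α : Type*} {Δ : Set (Formula α)} {ψ : Formula α}
    (h : Derives Δ ψ) :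
    ∀ M : Set α, (∀ φ ∈ Δ, satisfies M φ) → satisfies M ψ := by
  induction h with
  | mem hφ => intro M hM; exact hM _ hφ
  | mp hr hp hn ihr ihp ihn =>
    intro M hM
    refine ihr M hM ⟨fun p hp' => ?_, fun q hq' => ihn q hq' M hM⟩
    obtain ⟨x, hx, hxM⟩ := ihp p hp' M hM
    simp only [List.mem_singleton] at hx
    exact hx ▸ hxM
  | res hd hn ihd ihn =>
    intro M hM
    obtain ⟨p, hp, hpM⟩ := ihd M hM
    refine ⟨p, ?_, hpM⟩
    simp only [List.mem_append] at hp ⊢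
    rcases hp with (hp | hp) | hp
    · exact Or.inl hp
    · exact absurd hpM (ihn p hp M hM)
    · exact Or.inr hp
  | rbc hΦ hsteps ihΦ ihsteps =>
    intro M hM
    obtain ⟨q, hq, hqM⟩ := ihΦ M hM
    refine ihsteps q hq M ?_
    intro φ hφ
    rcases hφ with hφ | hφ
    · exact hM _ hφ
    · rcases hφ with rfl
      intro _
      exact ⟨q, List.mem_singleton_self q, hqM⟩

/-- soundness. -/
theorem stmt2 {α : Type*} (Δ : Set (Formula α))
    (hΔ : ∀ φ ∈ Δ, (∃ p : α, φ = Formula.neg p) ∨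
          (∃ pb nb hd : List α, φ = Formula.rule pb nb hd))
    (ψ : Formula α) (h : Derives Δ ψ) :
    ∀ M : Set α, (∀ φ ∈ Δ, satisfies M φ) → satisfies M ψ := soundness_aux h

end DLP
end

section
/- Completeness fails for formulas that are not disjunctions of atoms: for Δ = {∼s, p → s} (with p, s distinct atoms), every set M of atoms with M ⊨ Δ satisfies M ⊨ ∼p, yet Δ ⊬ ∼p. -/
namespace DLP

/-- completeness fails for formulas that are not disjunctions of atoms,
for `Δ = {∼s, p → s}`. -/
theorem stmt4 {α : Type*} (p s : α) (hps : p ≠ s) :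
    (∀ M : Set α,
        (∀ φ ∈ ({Formula.neg s, Formula.rule [p] [] [s]} : Set (Formula α)),
          satisfies M φ) →
        satisfies M (Formula.neg p)) ∧
    ¬ Derives ({Formula.neg s, Formula.rule [p] [] [s]} : Set (Formula α))
        (Formula.neg p) := by
  constructor
  · intro M hM hp
    have hs := hM (Formula.neg s) (by simp)
    have hr := hM (Formula.rule [p] [] [s]) (by simp)
    simp [satisfies] at hs hr
    exact hs (hr hp)
  · intro h
    cases h with
    | mem hm => rcases hm with h1 | h1 <;> simp_all


end DLP
end

section
/- Let π be a disjunctive logic program and M ⊆ Atoms(π). If M is a ⊆-minimal model of some program π' ⊆ π^M, then for every N ⊊ M, N does not satisfy Cn(M̄ ∪ π), i.e., there is a formula φ with M̄ ∪ π ⊢ φ and N ⊭ φ. -/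
namespace DLP

/-- if `M` is a ⊆-minimal model of some `π' ⊆ π^M`, then no `N ⊊ M`
satisfies `Cn(M̄ ∪ π)`. -/
theorem stmt6 {α : Type*} (π : Set (Rule α)) (hfin : π.Finite)
    (M : Set α) (hM : M ⊆ atoms π)
    (π' : Set (Rule α)) (hsub : π' ⊆ reduct π M)
    (hmodel : isModel M π')
    (hmin : ∀ N : Set α, N ⊂ M → ¬ isModel N π')
    (N : Set α) (hN : N ⊂ M) :
    ∃ φ : Formula α, Derives (formulas π ∪ barSet π M) φ ∧ ¬ satisfies N φ := by
  have hNnot := hmin N hN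
  simp only [isModel, not_forall] at hNnot
  obtain ⟨r', hr'π', hr'⟩ := hNnot
  obtain ⟨r, hrπ, hneg, hr'eq⟩ := hsub hr'π'
  refine ⟨r.toFormula, Derives.mem (Or.inl ⟨r, hrπ, rfl⟩), ?_⟩
  subst hr'eq
  simp only [Rule.toFormula, satisfies, not_forall, not_exists] at hr' ⊢
  obtain ⟨⟨hpos, -⟩, hhd⟩ := hr'
  exact ⟨⟨hpos, fun q hq hqN => hneg q hq (hN.1 hqN)⟩, hhd⟩

end DLP
end

section
/- Let π be a disjunctive logic program. If M is a stable model of π, then M satisfies Cn(M̄ ∪ π), i.e., M ⊨ φ for every formula φ with M̄ ∪ π ⊢ φ. -/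
namespace DLP

/-- Soundness of the derivation rules with respect to satisfaction. -/
theorem derives_sound {α : Type*} (M : Set α) :
    ∀ {Δ : Set (Formula α)} {φ : Formula α}, Derives Δ φ →
      (∀ ψ ∈ Δ, satisfies M ψ) → satisfies M φ := by
  intro Δ φ h
  induction h with
  | mem hφ => intro hΔ; exact hΔ _ hφ
  | mp h1 h2 h3 ih1 ih2 ih3 =>
    intro hΔ
    have hr := ih1 hΔ
    simp only [satisfies] at hr ⊢
    apply hr
    refine ⟨fun p hp => ?_, fun q hq => ih3 q hq hΔ⟩
    obtain ⟨q, hq, hqM⟩ := ih2 p hp hΔ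
    simp only [List.mem_singleton] at hq
    subst hq; exact hqM
  | res h1 h2 ih1 ih2 =>
    intro hΔ
    obtain ⟨p, hp, hpM⟩ := ih1 hΔ
    simp only [List.mem_append] at hp
    rcases hp with (hp | hp) | hp
    · exact ⟨p, by simp [hp], hpM⟩
    · exact absurd hpM (ih2 p hp hΔ)
    · exact ⟨p, by simp [hp], hpM⟩
  | rbc h1 h2 ih1 ih2 =>
    intro hΔ
    obtain ⟨q, hq, hqM⟩ := ih1 hΔ
    apply ih2 q hq
    intro ψ hψ
    rcases hψ with hψ | hψ
    · exact hΔ _ hψ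
    · simp only [Set.mem_singleton_iff] at hψ
      subst hψ
      exact fun _ => ⟨q, by simp, hqM⟩

/-- a stable model `M` of π satisfies `Cn(M̄ ∪ π)`. -/
theorem stmt7 {α : Type*} (π : Set (Rule α)) (hfin : π.Finite)
    (M : Set α) (hst : stableModel π M) :
    ∀ φ : Formula α, Derives (formulas π ∪ barSet π M) φ → satisfies M φ := by
  intro φ hder
  apply derives_sound M hder
  intro ψ hψ
  rcases hψ with hψ | hψ
  · obtain ⟨r, hr, rfl⟩ := hψ
    intro ⟨hpos, hneg⟩
    have hmem : (⟨r.pos, [], r.head⟩ : Rule α) ∈ reduct π M :=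
      ⟨r, hr, hneg, rfl⟩
    have := hst.2.1 _ hmem
    exact this ⟨hpos, by simp⟩
  · obtain ⟨p, hp, rfl⟩ := hψ
    exact hp.2

end DLP
end

section
/- Let π be a disjunctive logic program and let M be a stable model of π. Then M is the unique subset of Atoms(π) that satisfies Cn(π ∪ M̄); in particular M is the ⊆-minimum element of { N ⊆ Atoms(π) : N ⊨ Cn(π ∪ M̄) }. -/
namespace DLP

/-- Soundness of `Derives` w.r.t. satisfaction. -/
lemma sound_aux {α : Type*} (M : Set α) {Δ : Set (Formula α)} {φ : Formula α}
    (h : Derives Δ φ) (hM : ∀ ψ ∈ Δ, satisfies M ψ) : satisfies M φ := by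
  induction h with
  | mem h => exact hM _ h
  | mp hr hp hn ihr ihp ihn =>
      have hrule : satisfies M (Formula.rule _ _ _) := ihr hM
      apply hrule
      refine ⟨fun p hp' => ?_, fun q hq => ihn q hq hM⟩
      obtain ⟨x, hx, hxM⟩ := ihp p hp' hM
      simp only [List.mem_singleton] at hx
      exact hx ▸ hxM
  | res h hn ih ihn =>
      obtain ⟨p, hp, hpM⟩ := ih hM
      simp only [List.mem_append] at hp
      rcases hp with (hp | hp) | hp
      · exact ⟨p, List.mem_append_left _ hp, hpM⟩
      · exact absurd hpM (ihn p hp hM)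
      · exact ⟨p, List.mem_append_right _ hp, hpM⟩
  | rbc h hall ih ihall =>
      obtain ⟨q, hq, hqM⟩ := ih hM
      apply ihall q hq
      intro ψ hψ
      rcases hψ with hψ | hψ
      · exact hM _ hψ
      · rcases hψ with rfl
        intro _
        exact ⟨q, List.mem_singleton_self q, hqM⟩

/-- a stable model `M` of π is the unique subset of `Atoms(π)`
satisfying `Cn(π ∪ M̄)`; in particular it is the ⊆-minimum such set. -/
theorem stmt8 {α : Type*} (π : Set (Rule α)) (hfin : π.Finite)
    (M : Set α) (hst : stableModel π M) :
    (∀ φ : Formula α, Derives (formulas π ∪ barSet π M) φ → satisfies M φ) ∧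
    (∀ N : Set α, N ⊆ atoms π →
      (∀ φ : Formula α, Derives (formulas π ∪ barSet π M) φ → satisfies N φ) →
      N = M) := by
  have hsound : ∀ φ : Formula α, Derives (formulas π ∪ barSet π M) φ → satisfies M φ := by
    intro φ hder
    apply sound_aux M hder
    intro ψ hψ
    rcases hψ with hψ | hψ
    · obtain ⟨r, hr, rfl⟩ := hψ
      intro ⟨hpos, hneg⟩
      have hred : (⟨r.pos, [], r.head⟩ : Rule α) ∈ reduct π M :=
        ⟨r, hr, hneg, rfl⟩
      exact hst.2.1 (⟨r.pos, [], r.head⟩ : Rule α) hred ⟨hpos, by simp⟩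
    · obtain ⟨p, hp, rfl⟩ := hψ
      exact hp.2
  refine ⟨hsound, fun N hNatoms hN => ?_⟩
  have hNM : N ⊆ M := by
    intro p hpN
    by_contra hpM
    exact hN (Formula.neg p) (Derives.mem (Or.inr ⟨p, ⟨hNatoms hpN, hpM⟩, rfl⟩)) hpN
  have hNred : isModel N (reduct π M) := by
    rintro r' ⟨r, hr, hneg, rfl⟩
    intro ⟨hpos, _⟩
    have := hN r.toFormula (Derives.mem (Or.inl ⟨r, hr, rfl⟩))
    exact this ⟨hpos, fun q hq hqN => hneg q hq (hNM hqN)⟩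
  by_contra hne
  exact hst.2.2 N ⟨hNM, fun h => hne (le_antisymm hNM h)⟩ hNred


end DLP
end

section
/- Let π be a disjunctive logic program, let Δ ⊆ ∼Atoms(π), and suppose π ∪ Δ ⊢ r₁∨…∨r_k. If M is a model of the reduct π^{Δ̲} (where Δ̲ = Atoms(π) \ {p : ∼p ∈ Δ}) and M ⊆ Δ̲, then r_i ∈ M for some 1 ≤ i ≤ k. -/
namespace DLP

/-- Semantic value of a formula used in the soundness proof of `stmt10`. -/
def sem10 {α : Type*} (π : Set (Rule α)) (Δ : Set (Formula α)) (M : Set α) :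
    Formula α → Prop
  | Formula.disj l => ∃ p ∈ l, p ∈ M
  | Formula.neg q => q ∉ underline π Δ
  | Formula.rule pb nb hd =>
      ((∀ p ∈ pb, p ∈ M) ∧ (∀ q ∈ nb, q ∉ underline π Δ)) → ∃ p ∈ hd, p ∈ M

lemma key10 {α : Type*} (π : Set (Rule α)) (Δ : Set (Formula α))
    (hΔ : Δ ⊆ negAtoms π) (M : Set α)
    (hmod : isModel M (reduct π (underline π Δ)))
    (hMsub : M ⊆ underline π Δ) :
    ∀ {Γ : Set (Formula α)} {φ : Formula α}, Derives Γ φ →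
      Γ ⊆ formulas π ∪ Δ ∪ {f | ∃ q ∈ M, f = Formula.rule [] [] [q]} →
      sem10 π Δ M φ := by
  intro Γ φ h
  induction h with
  | @mem Γ φ hφ =>
      intro hΓ
      rcases hΓ hφ with (hπ | hδ) | hfact
      · -- formula of a program rule
        rcases hπ with ⟨r, hr, rfl⟩
        show ((∀ p ∈ r.pos, p ∈ M) ∧ (∀ q ∈ r.neg, q ∉ underline π Δ)) →
            ∃ p ∈ r.head, p ∈ M
        rintro ⟨hpos, hneg⟩
        have hred : (⟨r.pos, [], r.head⟩ : Rule α) ∈ reduct π (underline π Δ) :=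
          ⟨r, hr, hneg, rfl⟩
        have := hmod _ hred
        simp only [Rule.toFormula, satisfies] at this
        exact this ⟨hpos, by simp⟩
      · -- member of Δ
        rcases hΔ hδ with ⟨p, hp, rfl⟩
        show p ∉ underline π Δ
        intro hq
        exact hq.2 hδ
      · -- a fact rule for q ∈ M
        rcases hfact with ⟨q, hq, rfl⟩
        intro _
        exact ⟨q, by simp, hq⟩
  | @mp Γ pb nb hd hr hpos hneg ihr ihpos ihneg =>
      intro hΓ
      exact (ihr hΓ) ⟨fun p hp => by
          rcases ihpos p hp hΓ with ⟨x, hx, hxM⟩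
          simp at hx; cases hx; exact hxM,
        fun q hq => ihneg q hq hΓ⟩
  | @res Γ L₁ Φ L₂ hd hΦ ihd ihΦ =>
      intro hΓ
      rcases ihd hΓ with ⟨p, hp, hpM⟩
      refine ⟨p, ?_, hpM⟩
      simp only [List.mem_append] at hp ⊢
      rcases hp with (h1 | h2) | h3
      · exact Or.inl h1
      · exact absurd (hMsub hpM) (ihΦ p h2 hΓ)
      · exact Or.inr h3
  | @rbc Γ Φ hd hΦ hbr ihΦ ihbr =>
      intro hΓ
      rcases ihΦ hΓ with ⟨q, hq, hqM⟩
      refine ihbr q hq ?_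
      intro f hf
      rcases hf with hf | hf
      · exact hΓ hf
      · exact Or.inr ⟨q, hqM, hf⟩

/-- if `π ∪ Δ ⊢ r₁ ∨ … ∨ r_k` and `M ⊆ Δ̲` is a model of `π^{Δ̲}`,
then some `rᵢ ∈ M`. -/
theorem stmt10 {α : Type*} (π : Set (Rule α)) (hfin : π.Finite)
    (Δ : Set (Formula α)) (hΔ : Δ ⊆ negAtoms π)
    (rs : List α) (h : Derives (formulas π ∪ Δ) (Formula.disj rs))
    (M : Set α) (hmod : isModel M (reduct π (underline π Δ)))
    (hMsub : M ⊆ underline π Δ) :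
    ∃ r ∈ rs, r ∈ M := by
  have := key10 π Δ hΔ M hmod hMsub h
    (by intro f hf; rcases hf with hf | hf
        · exact Or.inl (Or.inl hf)
        · exact Or.inl (Or.inr hf))
  exact this

end DLP
end

section
/- Let π be a disjunctive logic program, let Δ ⊆ ∼Atoms(π), and suppose π ∪ Δ ⊢ r for an atom r. If M is a model of the reduct π^{Δ̲} (where Δ̲ = Atoms(π) \ {p : ∼p ∈ Δ}) and M ⊆ Δ̲, then r ∈ M. -/
namespace DLP

/-- Semantic value of a formula relative to `M` and `Δ̲`. -/
def sem {α : Type*} (π : Set (Rule α)) (Δ : Set (Formula α)) (M : Set α) :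
    Formula α → Prop
  | Formula.disj l => ∃ p ∈ l, p ∈ M
  | Formula.neg p => p ∉ underline π Δ
  | Formula.rule pb nb hd =>
      (∀ q ∈ nb, q ∉ underline π Δ) → (∀ p ∈ pb, p ∈ M) → ∃ p ∈ hd, p ∈ M

theorem sound {α : Type*} (π : Set (Rule α))
    (Δ : Set (Formula α)) (hΔ : Δ ⊆ negAtoms π)
    (M : Set α) (hmod : isModel M (reduct π (underline π Δ)))
    (hMsub : M ⊆ underline π Δ)
    (Γ : Set (Formula α)) (φ : Formula α) (h : Derives Γ φ)
    (hΓ : Γ ⊆ formulas π ∪ Δ ∪ {f | ∃ q ∈ M, f = Formula.rule [] [] [q]}) :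
    sem π Δ M φ := by
  induction h generalizing M with
  | @mem Γ φ hmem =>
    rcases hΓ hmem with (hf | hd) | he
    · -- a rule of π
      rcases hf with ⟨r, hr, rfl⟩
      intro hnb hpb
      have hred : (⟨r.pos, [], r.head⟩ : Rule α) ∈ reduct π (underline π Δ) :=
        ⟨r, hr, hnb, rfl⟩
      have := hmod _ hred
      simp only [Rule.toFormula, satisfies] at this
      exact this ⟨hpb, by simp⟩
    · -- a member of Δ : a negated atom
      rcases hΔ hd with ⟨p, hp, rfl⟩
      simp only [sem, underline, floorSet]
      intro hc
      exact hc.2 hd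
    · -- an extra fact
      rcases he with ⟨q, hq, rfl⟩
      intro _ _
      exact ⟨q, by simp, hq⟩
  | @mp Γ pb nb hd hrule hpos hneg ihr ihp ihn =>
    have h1 := ihr M hmod hMsub hΓ
    exact h1 (fun q hq => ihn q hq M hmod hMsub hΓ)
      (fun p hp => by
        rcases ihp p hp M hmod hMsub hΓ with ⟨p', hp', hpM⟩
        simp at hp'; rwa [← hp'])
  | @res Γ L₁ Φ L₂ hdisj hneg ihd ihn =>
    rcases ihd M hmod hMsub hΓ with ⟨p, hp, hpM⟩
    refine ⟨p, ?_, hpM⟩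
    simp only [List.mem_append] at hp ⊢
    rcases hp with (h1 | h2) | h3
    · exact Or.inl h1
    · exact absurd (hMsub hpM) (ihn p h2 M hmod hMsub hΓ)
    · exact Or.inr h3
  | @rbc Γ Φ hd hdisj hall ihd ihall =>
    rcases ihd M hmod hMsub hΓ with ⟨q, hq, hqM⟩
    refine ihall q hq M hmod hMsub ?_
    intro f hf
    rcases hf with hf | hf
    · exact hΓ hf
    · exact Or.inr ⟨q, hqM, hf⟩

/-- if `π ∪ Δ ⊢ r` for an atom `r` and `M ⊆ Δ̲` is a model of
`π^{Δ̲}`, then `r ∈ M`. -/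
theorem stmt11 {α : Type*} (π : Set (Rule α)) (hfin : π.Finite)
    (Δ : Set (Formula α)) (hΔ : Δ ⊆ negAtoms π)
    (r : α) (h : Derives (formulas π ∪ Δ) (Formula.disj [r]))
    (M : Set α) (hmod : isModel M (reduct π (underline π Δ)))
    (hMsub : M ⊆ underline π Δ) :
    r ∈ M := by
  have := sound π Δ hΔ M hmod hMsub _ _ h
    (fun f hf => by rcases hf with hf | hf
                    · exact Or.inl (Or.inl hf)
                    · exact Or.inl (Or.inr hf))
  rcases this with ⟨p, hp, hpM⟩
  simp at hp
  rwa [← hp]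

end DLP
end

section
/- Let π be a disjunctive logic program. If M is a stable model of π, then M̄ = {∼p : p ∈ Atoms(π) \ M} attacks every assumption in ∼Atoms(π) \ M̄: for every atom p ∈ M, π ∪ M̄ ⊢ p. -/
namespace DLP

/-- Auxiliary: atoms of a finite program form a finite set. -/
lemma atoms_finite {α : Type*} {π : Set (Rule α)} (hfin : π.Finite) :
    (atoms π).Finite := by
  have : atoms π ⊆ ⋃ r ∈ π, ({a | a ∈ r.pos} ∪ {a | a ∈ r.neg} ∪ {a | a ∈ r.head}) := by
    rintro p ⟨r, hr, hp⟩
    refine Set.mem_biUnion hr ?_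
    rcases hp with h | h | h
    · exact Or.inl (Or.inl h)
    · exact Or.inl (Or.inr h)
    · exact Or.inr h
  refine Set.Finite.subset (Set.Finite.biUnion hfin fun r _ => ?_) this
  exact ((r.pos.finite_toSet.union r.neg.finite_toSet).union r.head.finite_toSet)

/-- Auxiliary: a fact `→ q` in `Δ` derives `q`. -/
lemma derives_fact {α : Type*} {Δ : Set (Formula α)} {q : α}
    (h : Formula.rule [] [] [q] ∈ Δ) : Derives Δ (Formula.disj [q]) :=
  Derives.mp (Derives.mem h) (by simp) (by simp)

/-- Auxiliary: repeated applications of [Res] remove all disjuncts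
whose negation is derivable, yielding a subdisjunction all of whose
members satisfy `P`. -/
lemma derives_sub {α : Type*} {Δ : Set (Formula α)} (P : α → Prop) :
    ∀ (n : ℕ) (l : List α), l.length ≤ n → Derives Δ (Formula.disj l) →
    (∀ q ∈ l, ¬ P q → Derives Δ (Formula.neg q)) →
    ∃ l', (∀ q ∈ l', P q ∧ q ∈ l) ∧ Derives Δ (Formula.disj l') := by
  intro n
  induction n with
  | zero =>
    intro l hl hd _
    have : l = [] := List.length_eq_zero_iff.mp (Nat.le_zero.mp hl)
    subst this
    exact ⟨[], by simp, hd⟩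
  | succ n ih =>
    intro l hl hd hneg
    by_cases hall : ∀ q ∈ l, P q
    · exact ⟨l, fun q hq => ⟨hall q hq, hq⟩, hd⟩
    · push_neg at hall
      obtain ⟨x, hxl, hxP⟩ := hall
      obtain ⟨L₁, L₂, rfl⟩ := List.append_of_mem hxl
      have hres : Derives Δ (Formula.disj (L₁ ++ L₂)) := by
        refine Derives.res (Φ := [x]) ?_ ?_
        · simpa using hd
        · intro q hq
          simp only [List.mem_singleton] at hq
          exact hq ▸ hneg x hxl hxP
      have hlen : (L₁ ++ L₂).length ≤ n := by
        simp only [List.length_append, List.length_cons] at hl ⊢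
        omega
      obtain ⟨l', h1, h2⟩ := ih (L₁ ++ L₂) hlen hres
        (fun q hq h => hneg q (by simp only [List.mem_append, List.mem_cons] at hq ⊢; tauto) h)
      refine ⟨l', fun q hq => ⟨(h1 q hq).1, ?_⟩, h2⟩
      have := (h1 q hq).2
      simp only [List.mem_append, List.mem_cons] at this ⊢
      tauto

/-- if `M` is a stable model of π then `M̄` attacks every
assumption in `∼Atoms(π) \ M̄`: for every `p ∈ M`, `π ∪ M̄ ⊢ p`. -/
theorem stmt15 {α : Type*} (π : Set (Rule α)) (hfin : π.Finite)
    (M : Set α) (hst : stableModel π M) :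
    ∀ p ∈ M, Derives (formulas π ∪ barSet π M) (Formula.disj [p]) := by
  have hMfin : M.Finite := (atoms_finite hfin).subset hst.1
  -- key induction: facts from any S ⊆ M may be added
  have key : ∀ (n : ℕ) (S : Set α), S ⊆ M → (M \ S).ncard ≤ n →
      ∀ p ∈ M, Derives (formulas π ∪ barSet π M ∪
        (fun q => Formula.rule ([] : List α) [] [q]) '' S) (Formula.disj [p]) := by
    intro n
    induction n with
    | zero =>
      intro S hSM hcard p hp
      have hdiff : (M \ S) = ∅ := by
        have hfinD : (M \ S).Finite := hMfin.diff
        have : (M \ S).ncard = 0 := Nat.le_zero.mp hcard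
        rwa [Set.ncard_eq_zero hfinD] at this
      have hpS : p ∈ S := by
        by_contra hpS
        have : p ∈ M \ S := ⟨hp, hpS⟩
        rw [hdiff] at this
        exact this
      exact derives_fact (Or.inr ⟨p, hpS, rfl⟩)
    | succ n ih =>
      intro S hSM hcard p hp
      by_cases hpS : p ∈ S
      · exact derives_fact (Or.inr ⟨p, hpS, rfl⟩)
      · -- S is a proper subset of M, hence not a model of the reduct
        have hss : S ⊂ M := by
          rw [Set.ssubset_def]
          exact ⟨hSM, fun h => hpS (h hp)⟩
        have hnm : ¬ isModel S (reduct π M) := hst.2.2 S hss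
        unfold isModel at hnm
        push_neg at hnm
        obtain ⟨r', hr', hnsat⟩ := hnm
        obtain ⟨r, hrπ, hrneg, rfl⟩ := hr'
        obtain ⟨⟨hpos, -⟩, hhead⟩ :
            ((∀ q ∈ r.pos, q ∈ S) ∧ (∀ q ∈ ([] : List α), q ∉ S)) ∧
              ¬ ∃ h ∈ r.head, h ∈ S := by
          rw [← _root_.not_imp]
          exact hnsat
        push_neg at hhead
        set Δ' := formulas π ∪ barSet π M ∪
          (fun q => Formula.rule ([] : List α) [] [q]) '' S with hΔ'
        -- derive the head disjunction of r
        have hdisj : Derives Δ' (Formula.disj r.head) := by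
          refine Derives.mp (pb := r.pos) (nb := r.neg)
            (Derives.mem (Or.inl (Or.inl ⟨r, hrπ, rfl⟩))) ?_ ?_
          · intro q hq
            exact derives_fact (Or.inr ⟨q, hpos q hq, rfl⟩)
          · intro q hq
            refine Derives.mem (Or.inl (Or.inr ⟨q, ⟨⟨r, hrπ, Or.inr (Or.inl hq)⟩, hrneg q hq⟩, rfl⟩))
        -- remove head atoms not in M
        obtain ⟨l', hl'mem, hl'd⟩ := derives_sub (· ∈ M) r.head.length r.head le_rfl hdisj
          (fun q hq hqM => Derives.mem
            (Or.inl (Or.inr ⟨q, ⟨⟨r, hrπ, Or.inr (Or.inr hq)⟩, hqM⟩, rfl⟩)))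
        -- reason by cases on the remaining head atoms, each of which is in M \ S
        refine Derives.rbc hl'd ?_
        intro q hq
        obtain ⟨hqM, hqhead⟩ := hl'mem q hq
        have hqS : q ∉ S := hhead q hqhead
        have hEq : Δ' ∪ {Formula.rule ([] : List α) [] [q]} =
            formulas π ∪ barSet π M ∪
              (fun x => Formula.rule ([] : List α) [] [x]) '' (insert q S) := by
          rw [hΔ', Set.union_assoc, Set.union_singleton, Set.image_insert_eq]
        rw [hEq]
        refine ih (insert q S) (Set.insert_subset hqM hSM) ?_ p hp
        have hsub : M \ insert q S ⊆ (M \ S) \ {q} := by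
          rintro x ⟨hxM, hx⟩
          simp only [Set.mem_insert_iff, not_or] at hx
          exact ⟨⟨hxM, hx.2⟩, hx.1⟩
        have hlt : ((M \ S) \ {q}).ncard < (M \ S).ncard :=
          Set.ncard_diff_singleton_lt_of_mem ⟨hqM, hqS⟩ (hMfin.diff : (M \ S).Finite)
        have := Set.ncard_le_ncard hsub ((hMfin.diff : (M \ S).Finite).diff : ((M \ S) \ {q}).Finite)
        omega
  intro p hp
  have := key (M \ ∅).ncard ∅ (Set.empty_subset M) le_rfl p hp
  simpa using this

end DLP
end

section
/- Let π be a disjunctive logic program. If ℰ ⊆ ∼Atoms(π) is a stable extension of the induced assumption-based framework ABF(π), then no proper subset M ⊊ ℰ̲ (where ℰ̲ = Atoms(π) \ {p : ∼p ∈ ℰ}) is a model of the reduct π^{ℰ̲}. -/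
namespace DLP

/-- Mixed valuation: atoms evaluated in `M`, negations in `F`. -/
def sat2 {α : Type*} (M F : Set α) : Formula α → Prop
  | Formula.disj l => ∃ p ∈ l, p ∈ M
  | Formula.neg q => q ∈ F
  | Formula.rule pb nb hd =>
      ((∀ p ∈ pb, p ∈ M) ∧ (∀ q ∈ nb, q ∈ F)) → ∃ p ∈ hd, p ∈ M

theorem sat2_sound {α : Type*} {M F : Set α} (hdisj : ∀ x ∈ M, x ∉ F)
    {Δ : Set (Formula α)} {φ : Formula α} (h : Derives Δ φ)
    (hΔ : ∀ ψ ∈ Δ, sat2 M F ψ) : sat2 M F φ := by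
  induction h with
  | mem hφ => exact hΔ _ hφ
  | mp _ _ _ ih ihp ihn =>
      exact ih hΔ ⟨fun p hp => by
        obtain ⟨q, hq, hqM⟩ := ihp p hp hΔ
        simp at hq; exact hq ▸ hqM,
        fun q hq => ihn q hq hΔ⟩
  | res _ _ ih ihn =>
      obtain ⟨p, hp, hpM⟩ := ih hΔ
      refine ⟨p, ?_, hpM⟩
      simp only [List.mem_append] at hp ⊢
      rcases hp with (h1 | h2) | h3
      · exact Or.inl h1
      · exact absurd (ihn p h2 hΔ) (hdisj p hpM)
      · exact Or.inr h3
  | rbc _ _ ih ihq =>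
      obtain ⟨q, hq, hqM⟩ := ih hΔ
      refine ihq q hq ?_
      rintro ψ (hψ | hψ)
      · exact hΔ _ hψ
      · simp only [Set.mem_singleton_iff] at hψ
        subst hψ
        exact fun _ => ⟨q, by simp, hqM⟩

/-- if `ℰ` is a stable extension of `ABF(π)` then no proper subset
of `ℰ̲` is a model of the reduct `π^{ℰ̲}`. -/
theorem stmt17 {α : Type*} (π : Set (Rule α)) (hfin : π.Finite)
    (E : Set (Formula α)) (hst : stableExtension π E) :
    ∀ M : Set α, M ⊂ underline π E → ¬ isModel M (reduct π (underline π E)) := by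
  intro M hM hmodel
  obtain ⟨hsub, hne⟩ := hM
  obtain ⟨p, hpU, hpM⟩ : ∃ p, p ∈ underline π E ∧ p ∉ M := by
    by_contra h
    push_neg at h
    exact hne fun x hx => h x hx
  obtain ⟨hpA, hpF⟩ := hpU
  have hatt : attacks π E p := hst.2.2 p hpA hpF
  -- soundness with M and F = floorSet E
  have hdisj : ∀ x ∈ M, x ∉ floorSet E := fun x hx => (hsub hx).2
  have hΔ : ∀ ψ ∈ formulas π ∪ E, sat2 M (floorSet E) ψ := by
    rintro ψ (⟨r, hr, rfl⟩ | hψ)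
    · intro ⟨hpos, hneg⟩
      have hred : (⟨r.pos, [], r.head⟩ : Rule α) ∈ reduct π (underline π E) := by
        refine ⟨r, hr, fun x hx => ?_, rfl⟩
        exact fun hxU => hxU.2 (hneg x hx)
      exact hmodel ⟨r.pos, [], r.head⟩ hred ⟨hpos, by simp⟩
    · obtain ⟨q, -, rfl⟩ := hst.1 hψ
      exact hψ
  have := sat2_sound hdisj hatt hΔ
  obtain ⟨q, hq, hqM⟩ := this
  simp at hq
  exact hpM (hq ▸ hqM)

end DLP
end
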